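/- Let (V, s, t, c) be a flow network, let f be a maximum flow, and let D ⊆ V with s, t ∉ D be an in-tree rooted at a vertex v ∈ D: there is a function par : D → V such that for every w ∈ D, c (par w) w > 0 and c u w = 0 for every u ≠ par w (each w ∈ D has a unique incoming positive-capacity edge, from par w); par w ∈ D for every w ∈ D \ {v}, while par v ∉ D; and for every w ∈ D, iterating par starting from w reaches v after finitely many steps. If v ∈ T_f ∪ U_f, then D ⊆ T_f ∪ U_f; moreover, if additionally par v ∈ S_f, then every maximum flow g in the network satisfies g (par v) v = c (par v) v (the edge from par v into v is saturated by every maximum flow). -/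

import Mathlib

open scoped Classical

/-- A flow network: a finite vertex type with a source `s`, a sink `t` and a
capacity function `c` with no self-loops, no edges into `s` and no edges out of `t`. -/
structure FlowNet (V : Type) [Fintype V] where
  s : V
  t : V
  hst : s ≠ t
  c : V → V → ℕ
  c_self : ∀ v, c v v = 0
  c_to_s : ∀ v, c v s = 0
  c_from_t : ∀ v, c t v = 0

namespace FlowNet

variable {V : Type} [Fintype V]

/-- `f` is a flow: capacity-respecting and conserving flow at all internal vertices. -/
def IsFlow (N : FlowNet V) (f : V → V → ℕ) : Prop :=
  (∀ u v, f u v ≤ N.c u v) ∧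
  ∀ v, v ≠ N.s → v ≠ N.t → (∑ u, f u v) = ∑ u, f v u

/-- The value of a flow: total flow out of the source. -/
def value (N : FlowNet V) (f : V → V → ℕ) : ℕ := ∑ v, f N.s v

/-- `f` is a maximum flow. -/
def IsMaxFlow (N : FlowNet V) (f : V → V → ℕ) : Prop :=
  N.IsFlow f ∧ ∀ f', N.IsFlow f' → N.value f' ≤ N.value f

/-- Edge of the residual graph of `f`. -/
def ResEdge (N : FlowNet V) (f : V → V → ℕ) (u v : V) : Prop :=
  f u v < N.c u v ∨ 0 < f v u

/-- `S_f`: vertices reachable from `s` in the residual graph of `f`. -/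
def Sset (N : FlowNet V) (f : V → V → ℕ) : Set V :=
  {v | Relation.ReflTransGen (N.ResEdge f) N.s v}

/-- `T_f`: vertices from which `t` is reachable in the residual graph of `f`. -/
def Tset (N : FlowNet V) (f : V → V → ℕ) : Set V :=
  {v | Relation.ReflTransGen (N.ResEdge f) v N.t}

/-- `U_f`: all remaining vertices. -/
def Uset (N : FlowNet V) (f : V → V → ℕ) : Set V :=
  (N.Sset f ∪ N.Tset f)ᶜ

/-- An s-t cut: a set of vertices containing `s` but not `t`. -/
def IsCut (N : FlowNet V) (X : Set V) : Prop :=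
  N.s ∈ X ∧ N.t ∉ X

/-- The capacity of a cut. -/
noncomputable def cap (N : FlowNet V) (X : Set V) : ℕ :=
  ∑ u, ∑ v, if u ∈ X ∧ v ∉ X then N.c u v else 0

/-- A minimum s-t cut. -/
def IsMinCut (N : FlowNet V) (X : Set V) : Prop :=
  N.IsCut X ∧ ∀ Y, N.IsCut Y → N.cap X ≤ N.cap Y

end FlowNet

/-!
A vertex `w ∈ D` has a single positive-capacity in-edge, from `par w`. If `w` is reachable from
`s` in the residual graph, the last residual edge into `w` is either that unsaturated edge or the
reverse of an edge leaving `w` with positive flow; in the second case conservation forces positive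
flow from `par w` into `w`. Either way `par w ∈ S_f`, so `S_f` is closed under `par` on `D`;
following `par` up to the root `v ∉ S_f` shows that `D` misses `S_f`. Since `t ∉ S_f`, the set
`S_f` is a cut that every maximum flow crosses at full capacity, so each of them saturates
`par v → v`.

That `t ∉ S_f` is the augmenting-path argument. To avoid extracting a simple path, we push one unit
along one residual edge at a time, by induction on the set of vertices the path may visit: after the
push along the first edge `a → y`, the rest of the path can be chosen to avoid `a`, so it is still
residual.
-/

def restrictRel {α : Type*} (r : α → α → Prop) (B : Finset α) : α → α → Prop :=
  fun u w => u ∈ B ∧ w ∈ B ∧ r u w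

theorem exists_head_of_reflTransGen_restrictRel {α : Type*} [DecidableEq α]
    {r : α → α → Prop} {B : Finset α} {a z : α} (h : Relation.ReflTransGen (restrictRel r B) a z) :
    z = a ∨ ∃ y, a ∈ B ∧ y ∈ B.erase a ∧ r a y ∧
      Relation.ReflTransGen (restrictRel r (B.erase a)) y z := by
  induction h with
  | refl => exact Or.inl rfl
  | @tail z w _ hzw ih =>
    obtain ⟨hzB, hwB, hr⟩ := hzw
    by_cases hwa : w = a
    · exact Or.inl hwa
    have hwB' : w ∈ B.erase a := Finset.mem_erase.2 ⟨hwa, hwB⟩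
    rcases ih with rfl | ⟨y, haB, hyB, hay, hyz⟩
    · exact Or.inr ⟨w, hzB, hwB', hr, .refl⟩
    · have hzB' : z ∈ B.erase a := by
        rcases hyz.cases_tail with rfl | ⟨_, _, -, hz, -⟩
        exacts [hyB, hz]
      exact Or.inr ⟨y, haB, hyB, hay, hyz.tail ⟨hzB', hwB', hr⟩⟩

namespace FlowNet

variable {V : Type} [Fintype V]

noncomputable def excess (f : V → V → ℕ) (z : V) : ℤ := ∑ u, (f u z : ℤ) - ∑ u, (f z u : ℤ)

noncomputable def setEdge (f : V → V → ℕ) (p q : V) (n : ℕ) : V → V → ℕ :=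
  fun u w => if u = p ∧ w = q then n else f u w

omit [Fintype V] in
lemma setEdge_of_ne_left {f : V → V → ℕ} {p q u : V} (n : ℕ) (w : V) (hu : u ≠ p) :
    setEdge f p q n u w = f u w := by
  simp [setEdge, hu]

omit [Fintype V] in
lemma setEdge_of_ne_right {f : V → V → ℕ} {p q w : V} (n : ℕ) (u : V) (hw : w ≠ q) :
    setEdge f p q n u w = f u w := by
  simp [setEdge, hw]

lemma excess_setEdge (f : V → V → ℕ) (p q : V) (n : ℕ) (z : V) :
    excess (setEdge f p q n) z =
      excess f z + ((n : ℤ) - f p q) * ((if z = q then 1 else 0) - if z = p then 1 else 0) := by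
  have hcast : ∀ u w, (setEdge f p q n u w : ℤ) =
      f u w + if u = p ∧ w = q then (n : ℤ) - f p q else 0 := by
    intro u w
    unfold setEdge
    split_ifs with h
    · obtain ⟨rfl, rfl⟩ := h; ring
    · ring
  have hin : ∑ u, (if u = p ∧ z = q then (n : ℤ) - f p q else 0) =
      if z = q then (n : ℤ) - f p q else 0 := by
    by_cases hq : z = q <;> simp [hq]
  have hout : ∑ w, (if z = p ∧ w = q then (n : ℤ) - f p q else 0) =
      if z = p then (n : ℤ) - f p q else 0 := by
    by_cases hp : z = p <;> simp [hp]
  simp only [excess, hcast, Finset.sum_add_distrib, hin, hout]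
  split_ifs <;> ring

variable (N : FlowNet V)

lemma exists_push {f : V → V → ℕ} (hf : ∀ u w, f u w ≤ N.c u w) {a y : V}
    (hay : N.ResEdge f a y) :
    ∃ g : V → V → ℕ, (∀ u w, g u w ≤ N.c u w) ∧ (∀ u w, u ≠ a → w ≠ a → g u w = f u w) ∧
      ∀ z, excess g z = excess f z - (if z = a then 1 else 0) + if z = y then 1 else 0 := by
  rcases hay with hlt | hpos
  · refine ⟨setEdge f a y (f a y + 1), fun u w => ?_, fun u w hu _ => setEdge_of_ne_left _ w hu,
      fun z => ?_⟩
    · unfold setEdge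
      split_ifs with h
      · obtain ⟨rfl, rfl⟩ := h; omega
      · exact hf u w
    · rw [excess_setEdge]; push_cast; ring
  · refine ⟨setEdge f y a (f y a - 1), fun u w => ?_, fun u w _ hw => setEdge_of_ne_right _ u hw,
      fun z => ?_⟩
    · unfold setEdge
      split_ifs with h
      · obtain ⟨rfl, rfl⟩ := h; exact (Nat.sub_le _ _).trans (hf u w)
      · exact hf u w
    · rw [excess_setEdge, Nat.cast_sub hpos]; push_cast; ring

lemma exists_augment {f : V → V → ℕ} (hf : ∀ u w, f u w ≤ N.c u w) (B : Finset V) {a x : V}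
    (hpath : Relation.ReflTransGen (restrictRel (N.ResEdge f) B) a x) (hax : a ≠ x) :
    ∃ g : V → V → ℕ, (∀ u w, g u w ≤ N.c u w) ∧
      ∀ z, excess g z = excess f z - (if z = a then 1 else 0) + if z = x then 1 else 0 := by
  induction B using Finset.strongInduction generalizing f a with
  | H B ih =>
    rcases exists_head_of_reflTransGen_restrictRel hpath with rfl | ⟨y, haB, -, hay, hyx⟩
    · exact absurd rfl hax
    obtain ⟨g, hg, hgf, hgex⟩ := N.exists_push hf hay
    by_cases hy : y = x
    · exact ⟨g, hg, hy ▸ hgex⟩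
    have hyx' : Relation.ReflTransGen (restrictRel (N.ResEdge g) (B.erase a)) y x := by
      refine Relation.ReflTransGen.mono (fun u w ⟨hu, hw, huw⟩ => ⟨hu, hw, ?_⟩) y x hyx
      have hua := Finset.ne_of_mem_erase hu
      have hwa := Finset.ne_of_mem_erase hw
      rwa [ResEdge, hgf u w hua hwa, hgf w u hwa hua]
    obtain ⟨g', hg', hg'ex⟩ := ih _ (Finset.erase_ssubset haB) hg hyx' hy
    exact ⟨g', hg', fun z => by rw [hg'ex, hgex]; ring⟩

lemma excess_eq_zero_iff (f : V → V → ℕ) (z : V) :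
    excess f z = 0 ↔ ∑ u, f u z = ∑ u, f z u := by
  rw [excess, sub_eq_zero]
  exact_mod_cast Iff.rfl

lemma excess_source {f : V → V → ℕ} (hf : ∀ u w, f u w ≤ N.c u w) :
    excess f N.s = -N.value f := by
  have hin : ∀ u, f u N.s = 0 := fun u => Nat.le_zero.1 (N.c_to_s u ▸ hf u N.s)
  simp [excess, value, hin]

lemma sink_notMem_Sset {f : V → V → ℕ} (hf : N.IsMaxFlow f) : N.t ∉ N.Sset f := by
  intro ht
  have hpath : Relation.ReflTransGen (restrictRel (N.ResEdge f) Finset.univ) N.s N.t :=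
    Relation.ReflTransGen.mono (fun u w huw => ⟨Finset.mem_univ u, Finset.mem_univ w, huw⟩) _ _ ht
  obtain ⟨g, hg, hgex⟩ := N.exists_augment hf.1.1 Finset.univ hpath N.hst
  have hgflow : N.IsFlow g := by
    refine ⟨hg, fun z hzs hzt => (excess_eq_zero_iff g z).1 ?_⟩
    rw [hgex, (excess_eq_zero_iff f z).2 (hf.1.2 z hzs hzt)]
    simp [hzs, hzt]
  have hs := hgex N.s
  rw [N.excess_source hg, N.excess_source hf.1.1] at hs
  have := hf.2 g hgflow
  simp [N.hst] at hs
  omega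

lemma value_eq_sum_cut {h : V → V → ℕ} (hh : N.IsFlow h) {X : Finset V} (hs : N.s ∈ X)
    (ht : N.t ∉ X) : (N.value h : ℤ) = ∑ u ∈ X, ∑ w ∈ Xᶜ, ((h u w : ℤ) - h w u) := by
  have hnet : ∀ u, -excess h u = ∑ w ∈ X, ((h u w : ℤ) - h w u) +
      ∑ w ∈ Xᶜ, ((h u w : ℤ) - h w u) := by
    intro u
    rw [Finset.sum_add_sum_compl, Finset.sum_sub_distrib, excess]
    ring
  have hinner : ∑ u ∈ X, ∑ w ∈ X, ((h u w : ℤ) - h w u) = 0 := by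
    simp only [Finset.sum_sub_distrib]
    rw [Finset.sum_comm, sub_self]
  calc (N.value h : ℤ) = ∑ u ∈ X, -excess h u := by
        rw [Finset.sum_eq_single_of_mem N.s hs, N.excess_source hh.1, neg_neg]
        intro u huX hus
        have hut : u ≠ N.t := fun h => ht (h ▸ huX)
        rw [(excess_eq_zero_iff h u).2 (hh.2 u hus hut), neg_zero]
    _ = ∑ u ∈ X, ∑ w ∈ Xᶜ, ((h u w : ℤ) - h w u) := by
        simp only [hnet, Finset.sum_add_distrib, hinner, zero_add]

lemma eq_cap_and_eq_zero_of_mem_Sset_of_notMem_Sset {f : V → V → ℕ} (hf : ∀ u w, f u w ≤ N.c u w)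
    {a b : V} (ha : a ∈ N.Sset f) (hb : b ∉ N.Sset f) : f a b = N.c a b ∧ f b a = 0 := by
  have hres : ¬ N.ResEdge f a b := fun hab => hb (ha.tail hab)
  simp only [ResEdge, not_or, not_lt, Nat.le_zero] at hres
  exact ⟨le_antisymm (hf a b) hres.1, hres.2⟩

lemma maxFlow_eq_cap_of_mem_Sset_of_notMem_Sset {f g : V → V → ℕ} (hf : N.IsMaxFlow f)
    (hg : N.IsMaxFlow g) {a b : V} (ha : a ∈ N.Sset f) (hb : b ∉ N.Sset f) :
    g a b = N.c a b := by
  set X := Finset.univ.filter (· ∈ N.Sset f)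
  have hsX : N.s ∈ X := Finset.mem_filter.2 ⟨Finset.mem_univ _, .refl⟩
  have htX : N.t ∉ X := by simpa [X] using N.sink_notMem_Sset hf
  have hcross : ∀ u ∈ X, ∀ w ∈ Xᶜ, f u w = N.c u w ∧ f w u = 0 := fun u hu w hw =>
    N.eq_cap_and_eq_zero_of_mem_Sset_of_notMem_Sset hf.1.1 (by simpa [X] using hu)
      (by simpa [X] using hw)
  have hvalue : N.value g = N.value f := le_antisymm (hf.2 g hg.1) (hg.2 f hf.1)
  have hf_cut : (N.value f : ℤ) = ∑ u ∈ X, ∑ w ∈ Xᶜ, (N.c u w : ℤ) := by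
    rw [N.value_eq_sum_cut hf.1 hsX htX]
    refine Finset.sum_congr rfl fun u hu => Finset.sum_congr rfl fun w hw => ?_
    simp [hcross u hu w hw]
  have hslack : ∑ u ∈ X, ∑ w ∈ Xᶜ, ((N.c u w : ℤ) - g u w + g w u) = 0 :=
    calc ∑ u ∈ X, ∑ w ∈ Xᶜ, ((N.c u w : ℤ) - g u w + g w u)
        = ∑ u ∈ X, ∑ w ∈ Xᶜ, (N.c u w : ℤ) - ∑ u ∈ X, ∑ w ∈ Xᶜ, ((g u w : ℤ) - g w u) := by
          simp only [← Finset.sum_sub_distrib, sub_sub_eq_add_sub, add_sub_right_comm]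
      _ = N.value f - N.value g := by rw [hf_cut, N.value_eq_sum_cut hg.1 hsX htX]
      _ = 0 := by rw [hvalue, sub_self]
  have hnonneg : ∀ u w, 0 ≤ (N.c u w : ℤ) - g u w + g w u := fun u w => by
    have := hg.1.1 u w; omega
  have haX : a ∈ X := by simpa [X] using ha
  have hbX : b ∈ Xᶜ := by simpa [X] using hb
  have hab := (Finset.sum_eq_zero_iff_of_nonneg fun w _ => hnonneg a w).1
    ((Finset.sum_eq_zero_iff_of_nonneg fun u _ =>
      Finset.sum_nonneg fun w _ => hnonneg u w).1 hslack a haX) b hbX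
  have := hg.1.1 a b
  omega

lemma mem_Sset_of_unique_in_edge {f : V → V → ℕ} (hf : N.IsFlow f) {w p : V} (hws : w ≠ N.s)
    (hwt : w ≠ N.t) (hin : ∀ u, u ≠ p → N.c u w = 0) (hw : w ∈ N.Sset f) : p ∈ N.Sset f := by
  have hin_f : ∀ u, u ≠ p → f u w = 0 := fun u hu => Nat.le_zero.1 (hin u hu ▸ hf.1 u w)
  rcases hw.cases_tail with rfl | ⟨u, hu, hforward | hbackward⟩
  · exact absurd rfl hws
  · have hup : u = p := by
      by_contra hup
      rw [hin u hup] at hforward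
      exact Nat.not_lt_zero _ hforward
    exact hup ▸ hu
  · have hinflow : ∑ x, f x w = f p w := Fintype.sum_eq_single p hin_f
    have hout : f w u ≤ ∑ x, f w x :=
      Finset.single_le_sum (fun _ _ => Nat.zero_le _) (Finset.mem_univ u)
    have hpw : 0 < f p w := by
      rw [← hinflow, hf.2 w hws hwt]
      exact hbackward.trans_le hout
    exact hw.tail (Or.inr hpw)

end FlowNet

theorem stmt5_general {V : Type} [Fintype V] (N : FlowNet V) (f : V → V → ℕ)
    (hf : N.IsMaxFlow f)
    (D : Set V) (hsD : N.s ∉ D) (htD : N.t ∉ D)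
    (v : V) (par : V → V)
    (hpar1 : ∀ w ∈ D, 0 < N.c (par w) w ∧ ∀ u, u ≠ par w → N.c u w = 0)
    (hpar2 : ∀ w ∈ D, w ≠ v → par w ∈ D)
    (hpar4 : ∀ w ∈ D, ∃ k : ℕ, par^[k] w = v)
    (hvTU : v ∈ N.Tset f ∪ N.Uset f) :
    D ⊆ N.Tset f ∪ N.Uset f ∧
      (par v ∈ N.Sset f →
        ∀ g, N.IsMaxFlow g → g (par v) v = N.c (par v) v) := by
  have hvS : v ∉ N.Sset f := by
    intro hvS
    rcases hvTU with hvT | hvU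
    · exact N.sink_notMem_Sset hf (hvS.trans hvT)
    · exact hvU (Or.inl hvS)
  have hDS : ∀ w ∈ D, w ∉ N.Sset f := by
    intro w hw
    obtain ⟨k, hk⟩ := hpar4 w hw
    induction k generalizing w with
    | zero => exact (Function.iterate_zero_apply par w).symm.trans hk ▸ hvS
    | succ k ih =>
      by_cases hwv : w = v
      · exact hwv ▸ hvS
      exact fun hwS => ih (par w) (hpar2 w hw hwv) hk <|
        N.mem_Sset_of_unique_in_edge hf.1 (fun h => hsD (h ▸ hw)) (fun h => htD (h ▸ hw))
          (hpar1 w hw).2 hwS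
  refine ⟨fun w hw => ?_, fun hpv g hg => N.maxFlow_eq_cap_of_mem_Sset_of_notMem_Sset hf hg hpv hvS⟩
  by_cases hwT : w ∈ N.Tset f
  · exact Or.inl hwT
  · exact Or.inr fun hw' => hw'.elim (hDS w hw) hwT

/-- let `D` be an in-tree rooted at `v` (each `w ∈ D` has a unique incoming
positive-capacity edge, from `par w`). If `v ∈ T_f ∪ U_f` then `D ⊆ T_f ∪ U_f`; moreover
if additionally `par v ∈ S_f` then every maximum flow saturates the edge from `par v` to `v`. -/
theorem stmt5 {V : Type} [Fintype V] (N : FlowNet V) (f : V → V → ℕ)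
    (hf : N.IsMaxFlow f)
    (D : Set V) (hsD : N.s ∉ D) (htD : N.t ∉ D)
    (v : V) (hvD : v ∈ D) (par : V → V)
    (hpar1 : ∀ w ∈ D, 0 < N.c (par w) w ∧ ∀ u, u ≠ par w → N.c u w = 0)
    (hpar2 : ∀ w ∈ D, w ≠ v → par w ∈ D)
    (hpar3 : par v ∉ D)
    (hpar4 : ∀ w ∈ D, ∃ k : ℕ, par^[k] w = v)
    (hvTU : v ∈ N.Tset f ∪ N.Uset f) :
    D ⊆ N.Tset f ∪ N.Uset f ∧
      (par v ∈ N.Sset f →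
        ∀ g, N.IsMaxFlow g → g (par v) v = N.c (par v) v) :=
  stmt5_general N f hf D hsD htD v par hpar1 hpar2 hpar4 hvTU
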